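/- arXiv:2410.18846 — 6 statements merged into one kernel-verified Lean document; each statement's English description precedes it below -/
import Mathlib

section
/- Let G be a compact Lie group with a bi-invariant metric, and let 𝔥 ⊆ 𝔨 ⊆ 𝔤 be a nested triple of Lie subalgebras of 𝔤 = Lie(G). Set 𝔪 = 𝔥^⊥ ∩ 𝔨 and 𝔭 = 𝔨^⊥. If the fatness coindex f := max{ max_{x∈𝔭∖{0}} dim Z_𝔪(x), max_{y∈𝔪∖{0}} dim Z_𝔭(y) } equals 0, then dim 𝔪 ≤ dim 𝔭 − 1. -/
/-- Let `G` be a compact Lie group with a bi-invariant metric,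
formalized at the infinitesimal level: a finite-dimensional real Lie algebra `L`
(the Lie algebra `𝔤` of `G`) together with an `Ad`-invariant inner product, encoded
as a symmetric positive-definite ad-invariant bilinear form `B`.  Let `𝔥 ⊆ 𝔨 ⊆ 𝔤` be
a nested triple of Lie subalgebras, and set `𝔪 = 𝔥ᗮ ⊓ 𝔨` and `𝔭 = 𝔨ᗮ`.  If the
fatness coindex is `0`, i.e. `⁅x, y⁆ ≠ 0` for all nonzero `x ∈ 𝔭` and all nonzero
`y ∈ 𝔪`, then `dim 𝔪 ≤ dim 𝔭 − 1`. -/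
theorem stmt0 (L : Type*) [LieRing L] [LieAlgebra ℝ L] [FiniteDimensional ℝ L]
    (B : LinearMap.BilinForm ℝ L)
    (hsymm : ∀ x y : L, B x y = B y x)
    (hpos : ∀ x : L, x ≠ 0 → 0 < B x x)
    (hinv : ∀ x y z : L, B ⁅x, y⁆ z = B x ⁅y, z⁆)
    (h k : LieSubalgebra ℝ L) (hhk : h < k) (hkt : k ≠ ⊤)
    (m p : Submodule ℝ L)
    (hm : m = B.orthogonal h.toSubmodule ⊓ k.toSubmodule)
    (hp : p = B.orthogonal k.toSubmodule)
    (hfat : ∀ x ∈ p, x ≠ 0 → ∀ y ∈ m, y ≠ 0 → ⁅x, y⁆ ≠ 0) :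
    Module.finrank ℝ m ≤ Module.finrank ℝ p - 1 := by
  have hrefl : B.IsRefl := fun x y hxy => by rw [hsymm]; exact hxy
  have hnd : B.Nondegenerate := by
    refine LinearMap.BilinForm.Nondegenerate.ofSeparatingLeft ?_
    intro x hx
    by_contra hx0
    exact (hpos x hx0).ne' (hx x)
  -- p is nonzero
  have hpne : p ≠ ⊥ := by
    intro hbot
    apply hkt
    have hfr : Module.finrank ℝ (B.orthogonal k.toSubmodule) = 0 := by
      rw [← hp, hbot]; simp
    rw [LinearMap.BilinForm.finrank_orthogonal hnd] at hfr
    have : Module.finrank ℝ k.toSubmodule = Module.finrank ℝ L := by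
      have := Submodule.finrank_le k.toSubmodule
      omega
    have htop : k.toSubmodule = ⊤ := Submodule.eq_top_of_finrank_eq this
    rw [eq_top_iff]
    intro x _
    show x ∈ k.toSubmodule
    rw [htop]; trivial
  obtain ⟨x0, hx0p, hx0⟩ := Submodule.exists_mem_ne_zero_of_ne_bot hpne
  -- the injective map m → p ∩ x0^⊥
  set W : Submodule ℝ L := p ⊓ B.orthogonal (ℝ ∙ x0) with hW
  have hmk : m ≤ k.toSubmodule := by rw [hm]; exact inf_le_right
  have hx0k : ∀ z ∈ k.toSubmodule, B z x0 = 0 := by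
    intro z hz
    rw [hp] at hx0p
    exact hx0p z hz
  have hrange : ∀ y ∈ m, ⁅x0, y⁆ ∈ W := by
    intro y hy
    constructor
    · rw [hp]
      intro z hz
      have hyz : ⁅y, z⁆ ∈ k.toSubmodule := k.lie_mem' (hmk hy) hz
      show B z ⁅x0, y⁆ = 0
      rw [hsymm, hinv]
      rw [hsymm]
      exact hx0k _ hyz
    · intro n hn
      obtain ⟨c, rfl⟩ := Submodule.mem_span_singleton.mp hn
      show B (c • x0) ⁅x0, y⁆ = 0
      rw [map_smul]
      have : B x0 ⁅x0, y⁆ = 0 := by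
        rw [← hinv]
        simp
      simp [this]
  let f : m →ₗ[ℝ] W :=
    { toFun := fun y => ⟨⁅x0, (y : L)⁆, hrange y y.2⟩
      map_add' := fun a b => by ext; simp [lie_add]
      map_smul' := fun c a => by ext; simp [lie_smul] }
  have hinj : Function.Injective f := by
    intro a b hab
    have : ⁅x0, (a : L) - b⁆ = 0 := by
      rw [lie_sub, sub_eq_zero]
      exact Subtype.ext_iff.mp hab
    by_contra hne
    have hab' : ((a : L) - b) ≠ 0 := by
      intro hz
      exact hne (Subtype.ext (sub_eq_zero.mp hz))
    exact hfat x0 hx0p hx0 _ (m.sub_mem a.2 b.2) hab' this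
  have h1 : Module.finrank ℝ m ≤ Module.finrank ℝ W :=
    LinearMap.finrank_le_finrank_of_injective hinj
  have hWlt : W < p := by
    refine lt_of_le_of_ne inf_le_left ?_
    intro hWp
    have hx0W : x0 ∈ W := hWp ▸ hx0p
    have := hx0W.2 x0 (Submodule.mem_span_singleton_self x0)
    exact (hpos x0 hx0).ne' this
  have h2 : Module.finrank ℝ W < Module.finrank ℝ p :=
    Submodule.finrank_lt_finrank_of_lt hWlt
  omega
end

section
/- Let 𝔤 be a compact Lie algebra with an ad-invariant inner product ⟨·,·⟩, and let 𝔪, 𝔭 be orthogonal subspaces of 𝔤 (with 𝔭 = 𝔨^⊥ and 𝔪 = 𝔥^⊥ ∩ 𝔨 for a nested triple 𝔥 ⊆ 𝔨 ⊆ 𝔤). If the fatness coindex of the triple equals 1, then dim 𝔭 is odd. -/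
/-- The centralizer of `x` in a subspace `a` of a Lie algebra:
`Z_a(x) = {y ∈ a : ⁅x, y⁆ = 0}`. -/
def centralizerIn {L : Type*} [LieRing L] [LieAlgebra ℝ L]
    (a : Submodule ℝ L) (x : L) : Submodule ℝ L where
  carrier := {y | y ∈ a ∧ ⁅x, y⁆ = 0}
  add_mem' := by
    rintro y z ⟨hy, hy'⟩ ⟨hz, hz'⟩
    exact ⟨a.add_mem hy hz, by rw [lie_add, hy', hz', add_zero]⟩
  zero_mem' := ⟨a.zero_mem, lie_zero x⟩
  smul_mem' := by
    rintro c y ⟨hy, hy'⟩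
    exact ⟨a.smul_mem c hy, by rw [lie_smul, hy', smul_zero]⟩

open Module LinearMap Matrix
lemma mem_centralizerIn {L : Type*} [LieRing L] [LieAlgebra ℝ L]
    {a : Submodule ℝ L} {x z : L} : z ∈ centralizerIn a x ↔ z ∈ a ∧ ⁅x, z⁆ = 0 :=
  Iff.rfl

lemma even_of_alt_nondeg {W : Type*} [AddCommGroup W] [Module ℝ W] [FiniteDimensional ℝ W]
    (Ω : LinearMap.BilinForm ℝ W) (halt : Ω.IsAlt) (hnd : Ω.Nondegenerate) :
    Even (Module.finrank ℝ W) := by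
  classical
  let b := Module.finBasis ℝ W
  let M := LinearMap.BilinForm.toMatrix b Ω
  have hdet : M.det ≠ 0 :=
    Matrix.Nondegenerate.det_ne_zero (hnd.toMatrix b)
  have hskew : Mᵀ = -M := by
    ext i j
    simp only [Matrix.transpose_apply, Matrix.neg_apply, M,
      LinearMap.BilinForm.toMatrix_apply]
    rw [← halt.neg_eq]
  have hcard : Fintype.card (Fin (Module.finrank ℝ W)) = Module.finrank ℝ W := by simp
  have : M.det = (-1 : ℝ) ^ Module.finrank ℝ W * M.det := by
    conv_lhs => rw [← Matrix.det_transpose, hskew, Matrix.det_neg, hcard]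
  have hpow : ((-1 : ℝ)) ^ Module.finrank ℝ W = 1 :=
    mul_right_cancel₀ hdet (by rw [one_mul]; exact this.symm)
  exact (neg_one_pow_eq_one_iff_even (by norm_num : (-1:ℝ) ≠ 1)).mp hpow

/-- Let `𝔤` be a compact Lie algebra with an ad-invariant inner
product (encoded as a symmetric positive-definite ad-invariant bilinear form `B`),
and let `𝔪 = 𝔥ᗮ ⊓ 𝔨`, `𝔭 = 𝔨ᗮ` for a nested triple `𝔥 ⊆ 𝔨 ⊆ 𝔤` of Lie subalgebras.
If the fatness coindex of the triple equals `1` (all centralizers `Z_𝔪(x)`, `x ∈ 𝔭∖{0}`,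
and `Z_𝔭(y)`, `y ∈ 𝔪∖{0}`, have dimension at most `1`, and at least one of them has
dimension exactly `1`), then `dim 𝔭` is odd. -/
theorem stmt1 (L : Type*) [LieRing L] [LieAlgebra ℝ L] [FiniteDimensional ℝ L]
    (B : LinearMap.BilinForm ℝ L)
    (hsymm : ∀ x y : L, B x y = B y x)
    (hpos : ∀ x : L, x ≠ 0 → 0 < B x x)
    (hinv : ∀ x y z : L, B ⁅x, y⁆ z = B x ⁅y, z⁆)
    (h k : LieSubalgebra ℝ L) (hhk : h < k) (hkt : k ≠ ⊤)
    (m p : Submodule ℝ L)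
    (hm : m = B.orthogonal h.toSubmodule ⊓ k.toSubmodule)
    (hp : p = B.orthogonal k.toSubmodule)
    (hle₁ : ∀ x ∈ p, x ≠ 0 → Module.finrank ℝ (centralizerIn m x) ≤ 1)
    (hle₂ : ∀ y ∈ m, y ≠ 0 → Module.finrank ℝ (centralizerIn p y) ≤ 1)
    (hatt : (∃ x ∈ p, x ≠ 0 ∧ Module.finrank ℝ (centralizerIn m x) = 1) ∨
            (∃ y ∈ m, y ≠ 0 ∧ Module.finrank ℝ (centralizerIn p y) = 1)) :
    Odd (Module.finrank ℝ p) := by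
  have hBne : ∀ x : L, B x x = 0 → x = 0 := by
    intro x hx
    by_contra h0
    exact absurd hx (ne_of_gt (hpos x h0))
  -- Step 0: obtain `y ∈ m`, `y ≠ 0`, with `dim Z_p(y) = 1`.
  obtain ⟨y, hym, hy0, hZ1⟩ :
      ∃ y ∈ m, y ≠ 0 ∧ Module.finrank ℝ (centralizerIn p y) = 1 := by
    rcases hatt with ⟨x, hxp, hx0, hx1⟩ | hy
    · have hnt : Nontrivial ↥(centralizerIn m x) := by
        apply Module.nontrivial_of_finrank_pos (R := ℝ)
        omega
      obtain ⟨y', hy'⟩ := exists_ne (0 : ↥(centralizerIn m x))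
      obtain ⟨hym', hyc⟩ := mem_centralizerIn.mp y'.2
      have hy0' : (y' : L) ≠ 0 := fun hh => hy' (Subtype.ext hh)
      refine ⟨y', hym', hy0', ?_⟩
      have hxZ : x ∈ centralizerIn p (y' : L) := by
        refine mem_centralizerIn.mpr ⟨hxp, ?_⟩
        rw [← lie_skew, hyc, neg_zero]
      have hnt2 : Nontrivial ↥(centralizerIn p (y' : L)) :=
        ⟨⟨⟨x, hxZ⟩, 0, fun hh => hx0 (by simpa using congrArg Subtype.val hh)⟩⟩
      have h1 : 0 < Module.finrank ℝ (centralizerIn p (y' : L)) :=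
        Module.finrank_pos
      have h2 := hle₂ _ hym' hy0'
      omega
    · exact hy
  -- Setup on `↥p`.
  have hyk : y ∈ k.toSubmodule := by
    rw [hm] at hym; exact hym.2
  let Bp : LinearMap.BilinForm ℝ ↥p := B.restrict p
  have hBpRefl : Bp.IsRefl := fun u v huv => by
    simpa [Bp, LinearMap.BilinForm.restrict_apply, hsymm (v : L) u] using huv
  have hBpNd : Bp.Nondegenerate := by
    refine LinearMap.BilinForm.Nondegenerate.ofSeparatingLeft ?_
    intro u hu
    have := hu u
    have : (u : L) = 0 := hBne _ this
    exact Subtype.ext this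
  set Z : Submodule ℝ L := centralizerIn p y with hZdef
  have hZle : Z ≤ p := fun z hz => hz.1
  set Z' : Submodule ℝ ↥p := Z.comap p.subtype with hZ'def
  have hZ'1 : Module.finrank ℝ Z' = 1 := by
    rw [← hZ1]
    exact LinearEquiv.finrank_eq (Submodule.comapSubtypeEquivOfLe hZle)
  set V : Submodule ℝ ↥p := Bp.orthogonal Z' with hVdef
  have hVrank : Module.finrank ℝ V = Module.finrank ℝ ↥p - 1 := by
    rw [hVdef, LinearMap.BilinForm.finrank_orthogonal hBpNd, hZ'1]
  have h1le : 1 ≤ Module.finrank ℝ ↥p := hZ'1 ▸ Submodule.finrank_le Z'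
  -- membership of `p` as orthogonality
  have hp_mem : ∀ w : L, w ∈ p ↔ ∀ z ∈ k.toSubmodule, B z w = 0 := by
    intro w
    rw [hp, LinearMap.BilinForm.mem_orthogonal_iff]
  -- The bilinear form `Ω` on `V`.
  let j : ↥V →ₗ[ℝ] L := p.subtype ∘ₗ V.subtype
  let T : LinearMap.BilinForm ℝ L := LinearMap.mk₂ ℝ (fun u v => B ⁅u, v⁆ y)
    (fun u u' v => by simp [add_lie])
    (fun c u v => by simp [smul_lie])
    (fun u v v' => by simp [lie_add])
    (fun c u v => by simp [lie_smul])
  let Ω : LinearMap.BilinForm ℝ ↥V := T.compl₁₂ j j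
  have hΩ_apply : ∀ u v : ↥V, Ω u v = B ⁅((u : ↥p) : L), ((v : ↥p) : L)⁆ y :=
    fun u v => rfl
  have halt : Ω.IsAlt := by
    intro u
    rw [hΩ_apply, lie_self, map_zero, LinearMap.zero_apply]
  have hnd : Ω.Nondegenerate := by
    refine LinearMap.BilinForm.Nondegenerate.ofSeparatingLeft ?_
    intro u hu
    set uL : L := ((u : ↥p) : L) with huL
    have huV : (u : ↥p) ∈ V := (u : ↥V).2
    have hup : uL ∈ p := (u : ↥p).2
    -- `⁅y, uL⁆ ∈ p`
    have hq_p : ⁅y, uL⁆ ∈ p := by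
      rw [hp_mem]
      intro z hz
      have h1 : B ⁅z, y⁆ uL = B z ⁅y, uL⁆ := hinv z y uL
      have hzy : ⁅z, y⁆ ∈ k.toSubmodule := k.lie_mem hz hyk
      rw [← h1]
      exact (hp_mem uL).mp hup _ hzy
    set q : ↥p := ⟨⁅y, uL⁆, hq_p⟩ with hqdef
    -- `q ∈ V`
    have hqV : q ∈ V := by
      rw [hVdef, LinearMap.BilinForm.mem_orthogonal_iff]
      intro z hz
      obtain ⟨hzp, hzc⟩ := mem_centralizerIn.mp (Submodule.mem_comap.mp hz)
      show Bp z q = 0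
      show B (z : L) ⁅y, uL⁆ = 0
      rw [← hinv]
      have hzc' : ⁅y, (z : L)⁆ = 0 := hzc
      have : ⁅(z : L), y⁆ = 0 := by rw [← lie_skew, hzc', neg_zero]
      rw [this, map_zero, LinearMap.zero_apply]
    -- `B ⁅y,uL⁆ v = 0` for every `v ∈ V`
    have hqzero : ∀ v : ↥V, B ⁅y, uL⁆ ((v : ↥p) : L) = 0 := by
      intro v
      rw [hinv, hsymm]
      exact hu v
    have hself : B ⁅y, uL⁆ ⁅y, uL⁆ = 0 := hqzero ⟨q, hqV⟩
    have hq0 : ⁅y, uL⁆ = 0 := hBne _ hself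
    have huZ : (u : ↥p) ∈ Z' := by
      rw [hZ'def]
      exact mem_centralizerIn.mpr ⟨hup, hq0⟩
    have : Bp (u : ↥p) (u : ↥p) = 0 := hBpRefl _ _ (huV (u : ↥p) huZ)
    have huL0 : uL = 0 := hBne _ this
    exact Subtype.ext (Subtype.ext huL0)
  have heven : Even (Module.finrank ℝ V) := even_of_alt_nondeg Ω halt hnd
  obtain ⟨c, hc⟩ := heven
  exact ⟨c, by omega⟩
end

section
/- For n ≥ 4, consider the nested triple of Lie algebras so(n−1) ⊆ so(n) ⊆ so(n+1) given by the block-diagonal embeddings x ↦ diag(x,0). With 𝔪 = so(n−1)^⊥ ∩ so(n) and 𝔭 = so(n)^⊥ in so(n+1) (orthogonal complements with respect to the trace form), the fatness coindex of this triple is strictly greater than 1; in fact taking y ∈ 𝔪 corresponding to the vector e₁ ∈ ℝ^{n−1}, one has dim Z_𝔭(y) = n − 2. -/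
/-- For `z ∈ ℝᵏ`, the skew-symmetric matrix `M(z) ∈ so(k+1)` whose last column is
`(z₁, …, z_k, 0)ᵀ`, whose last row is `(−z₁, …, −z_k, 0)`, and with zeros elsewhere. -/
def Mvec {k : ℕ} (z : Fin k → ℝ) : Matrix (Fin (k + 1)) (Fin (k + 1)) ℝ :=
  Matrix.of fun i j =>
    if hi : (i : ℕ) < k then
      if hj : (j : ℕ) < k then 0 else z ⟨i, hi⟩
    else
      if hj : (j : ℕ) < k then -z ⟨j, hj⟩ else 0

/-- `Mvec` as a linear map. -/
def MvecL (k : ℕ) : (Fin k → ℝ) →ₗ[ℝ] Matrix (Fin (k + 1)) (Fin (k + 1)) ℝ where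
  toFun := Mvec
  map_add' z w := by
    funext i j
    simp only [Mvec, Matrix.of_apply, Matrix.add_apply, Pi.add_apply]
    split_ifs <;> simp <;> ring
  map_smul' c z := by
    funext i j
    simp only [Mvec, Matrix.of_apply, Matrix.smul_apply, Pi.smul_apply, RingHom.id_apply,
      smul_eq_mul]
    split_ifs <;> simp [mul_comm]

/-- The block-diagonal embedding `A ↦ diag(A, 0)` of `k × k` matrices into
`(k+1) × (k+1)` matrices. -/
def embedM {k : ℕ} (A : Matrix (Fin k) (Fin k) ℝ) : Matrix (Fin (k + 1)) (Fin (k + 1)) ℝ :=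
  Matrix.of fun i j =>
    if hi : (i : ℕ) < k then
      if hj : (j : ℕ) < k then A ⟨i, hi⟩ ⟨j, hj⟩ else 0
    else 0

/-- `embedM` as a linear map. -/
def embedL (k : ℕ) : Matrix (Fin k) (Fin k) ℝ →ₗ[ℝ] Matrix (Fin (k + 1)) (Fin (k + 1)) ℝ where
  toFun := embedM
  map_add' A C := by
    funext i j
    simp only [embedM, Matrix.of_apply, Matrix.add_apply]
    split_ifs <;> simp
  map_smul' c A := by
    funext i j
    simp only [embedM, Matrix.of_apply, Matrix.smul_apply, RingHom.id_apply, smul_eq_mul]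
    split_ifs <;> simp

attribute [local instance 100] LieRing.ofAssociativeRing

/-! `𝔭 ≅ ℝⁿ` as a module over `so(n)`: bracketing with `diag(A, 0)` acts on `M(z)` as `A` acts on
`z`, i.e. `⁅diag(A, 0), M(z)⁆ = M(A z)`. Hence `Z_𝔭(diag(A, 0)) = M(ker A)`. For `A = M'(w)` with
`w ≠ 0`, `M'(w) z = (w₁ zₙ, …, w_{n-1} zₙ, -⟨w, z'⟩)`, whose kernel is cut out by the two
independent equations `zₙ = 0` and `⟨w, z'⟩ = 0` (`z'` being `z` without its last coordinate), so
it has dimension `n − 2`. -/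

open Matrix

namespace embedM

variable {k : ℕ}

@[simp] lemma castSucc_castSucc (A : Matrix (Fin k) (Fin k) ℝ) (i j : Fin k) :
    embedM A i.castSucc j.castSucc = A i j := by
  simp [embedM]

@[simp] lemma apply_last (A : Matrix (Fin k) (Fin k) ℝ) (i : Fin (k + 1)) :
    embedM A i (Fin.last k) = 0 := by
  simp [embedM]

@[simp] lemma last_apply (A : Matrix (Fin k) (Fin k) ℝ) (j : Fin (k + 1)) :
    embedM A (Fin.last k) j = 0 := by
  simp [embedM]

end embedM

namespace Mvec

variable {k : ℕ}

@[simp] lemma castSucc_castSucc (z : Fin k → ℝ) (i j : Fin k) :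
    Mvec z i.castSucc j.castSucc = 0 := by
  simp [Mvec]

@[simp] lemma castSucc_last (z : Fin k → ℝ) (i : Fin k) :
    Mvec z i.castSucc (Fin.last k) = z i := by
  simp [Mvec]

@[simp] lemma last_castSucc (z : Fin k → ℝ) (j : Fin k) :
    Mvec z (Fin.last k) j.castSucc = -z j := by
  simp [Mvec]

@[simp] lemma last_last (z : Fin k → ℝ) : Mvec z (Fin.last k) (Fin.last k) = 0 := by
  simp [Mvec]

lemma mulVec_castSucc (w : Fin k → ℝ) (z : Fin (k + 1) → ℝ) (i : Fin k) :
    (Mvec w *ᵥ z) i.castSucc = w i * z (Fin.last k) := by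
  simp [Matrix.mulVec, dotProduct, Fin.sum_univ_castSucc]

lemma mulVec_last (w : Fin k → ℝ) (z : Fin (k + 1) → ℝ) :
    (Mvec w *ᵥ z) (Fin.last k) = -∑ j, w j * z j.castSucc := by
  simp [Matrix.mulVec, dotProduct, Fin.sum_univ_castSucc]

lemma mulVec_eq_zero_iff {w : Fin k → ℝ} (hw : w ≠ 0) (z : Fin (k + 1) → ℝ) :
    Mvec w *ᵥ z = 0 ↔ z (Fin.last k) = 0 ∧ ∑ j, w j * z j.castSucc = 0 := by
  obtain ⟨j₀, hj₀⟩ := Function.ne_iff.mp hw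
  constructor
  · intro h
    have hlast : z (Fin.last k) = 0 := by
      have := congrFun h j₀.castSucc
      rw [mulVec_castSucc, Pi.zero_apply] at this
      exact (mul_eq_zero.mp this).resolve_left hj₀
    refine ⟨hlast, ?_⟩
    simpa [mulVec_last] using congrFun h (Fin.last k)
  · rintro ⟨hlast, hsum⟩
    funext i
    cases i using Fin.lastCases <;> simp [mulVec_castSucc, mulVec_last, hlast, hsum]

lemma finrank_ker_mulVecLin {w : Fin k → ℝ} (hw : w ≠ 0) :
    Module.finrank ℝ (LinearMap.ker (Mvec w).mulVecLin) = k - 1 := by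
  let π : (Fin (k + 1) → ℝ) →ₗ[ℝ] ℝ × ℝ :=
    (LinearMap.proj (Fin.last k)).prod (∑ j, w j • LinearMap.proj j.castSucc)
  have hker : LinearMap.ker (Mvec w).mulVecLin = LinearMap.ker π := by
    ext z
    simp [π, mulVec_eq_zero_iff hw]
  have hsurj : Function.Surjective π := by
    obtain ⟨j₀, hj₀⟩ := Function.ne_iff.mp hw
    rintro ⟨s, t⟩
    refine ⟨Pi.single (Fin.last k) s + Pi.single j₀.castSucc (t / w j₀), ?_⟩
    simp [π, Pi.single_apply, Fin.castSucc_ne_last, mul_div_cancel₀ _ hj₀]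
  have := LinearMap.finrank_range_add_finrank_ker π
  rw [LinearMap.range_eq_top.mpr hsurj, finrank_top, ← hker] at this
  simp only [Module.finrank_prod, Module.finrank_self, Module.finrank_fin_fun] at this
  omega

end Mvec

lemma Mvec_injective {k : ℕ} : Function.Injective (@Mvec k) := by
  intro z w h
  funext i
  simpa using congrFun (congrFun h i.castSucc) (Fin.last k)

lemma embedM_injective {k : ℕ} : Function.Injective (@embedM k) := by
  intro A C h
  funext i j
  simpa using congrFun (congrFun h i.castSucc) j.castSucc

lemma MvecL_injective (k : ℕ) : Function.Injective (MvecL k) := Mvec_injective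

lemma Mvec_zero {k : ℕ} : Mvec (0 : Fin k → ℝ) = 0 := map_zero (MvecL k)

lemma embedM_zero {k : ℕ} : embedM (0 : Matrix (Fin k) (Fin k) ℝ) = 0 :=
  map_zero (embedL k)

lemma Mvec_transpose {k : ℕ} (z : Fin k → ℝ) : (Mvec z)ᵀ = -Mvec z := by
  funext i j
  cases i using Fin.lastCases <;> cases j using Fin.lastCases <;> simp

lemma lie_embedM_Mvec {k : ℕ} {A : Matrix (Fin (k + 1)) (Fin (k + 1)) ℝ} (hA : Aᵀ = -A)
    (z : Fin (k + 1) → ℝ) : ⁅embedM A, Mvec z⁆ = Mvec (A *ᵥ z) := by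
  have hskew : ∀ i j, A i j = -A j i := fun i j => by
    simpa using congrFun (congrFun hA j) i
  funext i j
  -- skewness is needed only in the last row, where the bracket is `-zᵀA = (A z)ᵀ`
  cases i using Fin.lastCases <;> cases j using Fin.lastCases <;>
    simp [Ring.lie_def, Matrix.mul_apply, Fin.sum_univ_castSucc, Matrix.mulVec, dotProduct,
      hskew _ (Fin.last k), hskew (Fin.castSucc _), mul_comm]
  ring

lemma centralizerIn_range_MvecL_embedM {k : ℕ} {A : Matrix (Fin (k + 1)) (Fin (k + 1)) ℝ}
    (hA : Aᵀ = -A) :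
    centralizerIn (LinearMap.range (MvecL (k + 1))) (embedM A) =
      (LinearMap.ker A.mulVecLin).map (MvecL (k + 1)) := by
  ext X
  constructor
  · rintro ⟨⟨z, rfl⟩, hz⟩
    refine ⟨z, ?_, rfl⟩
    have : MvecL (k + 1) (A *ᵥ z) = MvecL (k + 1) 0 := by
      rw [map_zero, ← hz]
      exact (lie_embedM_Mvec hA z).symm
    exact MvecL_injective _ this
  · rintro ⟨z, hz, rfl⟩
    refine ⟨⟨z, rfl⟩, ?_⟩
    change ⁅embedM A, Mvec z⁆ = 0
    rw [lie_embedM_Mvec hA, show A *ᵥ z = 0 from hz]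
    exact map_zero (MvecL (k + 1))

lemma finrank_centralizerIn_embedM_Mvec {k : ℕ} {w : Fin k → ℝ} (hw : w ≠ 0) :
    Module.finrank ℝ (centralizerIn (LinearMap.range (MvecL (k + 1))) (embedM (Mvec w))) =
      k - 1 := by
  rw [centralizerIn_range_MvecL_embedM (Mvec_transpose w),
    ← (Submodule.equivMapOfInjective _ (MvecL_injective _) _).finrank_eq]
  exact Mvec.finrank_ker_mulVecLin hw

/-- For `n = m + 1 ≥ 4`, consider the nested triple
`so(n−1) ⊆ so(n) ⊆ so(n+1)` given by the block-diagonal embeddings `x ↦ diag(x, 0)`.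
With `𝔪 = so(n−1)ᗮ ⊓ so(n) = {diag(M'(w), 0) : w ∈ ℝ^{n−1}}` and
`𝔭 = so(n)ᗮ = {M(z) : z ∈ ℝⁿ}` (orthogonal complements for the trace form), the
fatness coindex of this triple is strictly greater than `1`: for the element
`y ∈ 𝔪` corresponding to `e₁ ∈ ℝ^{n−1}`, one has `dim Z_𝔭(y) = n − 2 > 1`. -/
theorem stmt3 (m : ℕ) (hm : 3 ≤ m)
    (p : Submodule ℝ (Matrix (Fin (m + 2)) (Fin (m + 2)) ℝ))
    (hp : p = LinearMap.range (MvecL (m + 1)))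
    (mm : Submodule ℝ (Matrix (Fin (m + 2)) (Fin (m + 2)) ℝ))
    (hmm : mm = Submodule.map (embedL (m + 1)) (LinearMap.range (MvecL m)))
    (e₁ : Fin m → ℝ) (he₁ : e₁ = fun i => if i = ⟨0, by omega⟩ then 1 else 0)
    (y : Matrix (Fin (m + 2)) (Fin (m + 2)) ℝ) (hy : y = embedM (Mvec e₁)) :
    y ∈ mm ∧ y ≠ 0 ∧
      Module.finrank ℝ (centralizerIn p y) = m - 1 ∧
      1 < Module.finrank ℝ (centralizerIn p y) := by
  have he₁_ne : e₁ ≠ 0 := fun h => by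
    simpa [he₁] using congrFun h ⟨0, by omega⟩
  have hdim : Module.finrank ℝ (centralizerIn p y) = m - 1 := by
    rw [hp, hy]
    exact finrank_centralizerIn_embedM_Mvec he₁_ne
  refine ⟨?_, ?_, hdim, by omega⟩
  · rw [hmm, hy]
    exact ⟨Mvec e₁, ⟨e₁, rfl⟩, rfl⟩
  · rw [hy, ← embedM_zero, ← Mvec_zero]
    exact embedM_injective.ne (Mvec_injective.ne he₁_ne)
end

section
/- Let n₁, n₂, n₃, n₄ be integers and define ℓᵢ and rᵢ as: ℓ₁ = n₁, ℓ₂ = n₁+n₃+n₄, ℓ₃ = n₂+n₃−n₄, ℓ₄ = n₂, r₁ = n₃, r₂ = n₄, r₃ = −n₁+n₂−n₄, r₄ = n₁+n₂+n₃. Suppose gcd(ℓᵢ, rⱼ) = 1 for all i, j ∈ {1,2,3,4} (with the convention gcd(0,0) = 0 ≠ 1). Then n₁ ≡ n₂ (mod 2) and n₃ ≡ n₄ (mod 2), and consequently Σᵢ₌₁⁴ (ℓᵢ² + rᵢ²) is divisible by 8. -/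
lemma not_both_even {a b : ℤ} (h : Int.gcd a b = 1) : ¬ (a % 2 = 0 ∧ b % 2 = 0) := by
  rintro ⟨ha, hb⟩
  have hc : IsCoprime a b := Int.isCoprime_iff_gcd_eq_one.mpr h
  have h2 : IsUnit (2 : ℤ) :=
    hc.isUnit_of_dvd' (Int.dvd_of_emod_eq_zero ha) (Int.dvd_of_emod_eq_zero hb)
  rw [Int.isUnit_iff] at h2
  omega

/-- With `ℓ = (n₁, n₁+n₃+n₄, n₂+n₃−n₄, n₂)` and
`r = (n₃, n₄, −n₁+n₂−n₄, n₁+n₂+n₃)`, if `gcd(ℓᵢ, rⱼ) = 1` for all `i, j` (with the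
convention `gcd(0,0) = 0 ≠ 1`), then `n₁ ≡ n₂ (mod 2)` and `n₃ ≡ n₄ (mod 2)`, and
consequently `Σᵢ (ℓᵢ² + rᵢ²)` is divisible by `8`. -/
theorem stmt11 (n₁ n₂ n₃ n₄ : ℤ) (ℓ r : Fin 4 → ℤ)
    (hℓ : ℓ = ![n₁, n₁ + n₃ + n₄, n₂ + n₃ - n₄, n₂])
    (hr : r = ![n₃, n₄, -n₁ + n₂ - n₄, n₁ + n₂ + n₃])
    (hgcd : ∀ i j : Fin 4, Int.gcd (ℓ i) (r j) = 1) :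
    n₁ ≡ n₂ [ZMOD 2] ∧ n₃ ≡ n₄ [ZMOD 2] ∧
      (8 : ℤ) ∣ ∑ i : Fin 4, (ℓ i ^ 2 + r i ^ 2) := by
  subst hℓ hr
  have h00 : ¬(n₁ % 2 = 0 ∧ n₃ % 2 = 0) := by simpa using not_both_even (hgcd 0 0)
  have h01 : ¬(n₁ % 2 = 0 ∧ n₄ % 2 = 0) := by simpa using not_both_even (hgcd 0 1)
  have h02 : ¬(n₁ % 2 = 0 ∧ (-n₁ + n₂ - n₄) % 2 = 0) := by simpa using not_both_even (hgcd 0 2)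
  have h03 : ¬(n₁ % 2 = 0 ∧ (n₁ + n₂ + n₃) % 2 = 0) := by simpa using not_both_even (hgcd 0 3)
  have h30 : ¬(n₂ % 2 = 0 ∧ n₃ % 2 = 0) := by simpa using not_both_even (hgcd 3 0)
  have h31 : ¬(n₂ % 2 = 0 ∧ n₄ % 2 = 0) := by simpa using not_both_even (hgcd 3 1)
  have h32 : ¬(n₂ % 2 = 0 ∧ (-n₁ + n₂ - n₄) % 2 = 0) := by simpa using not_both_even (hgcd 3 2)
  have h33 : ¬(n₂ % 2 = 0 ∧ (n₁ + n₂ + n₃) % 2 = 0) := by simpa using not_both_even (hgcd 3 3)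
  have h10 : ¬((n₁ + n₃ + n₄) % 2 = 0 ∧ n₃ % 2 = 0) := by simpa using not_both_even (hgcd 1 0)
  have h11 : ¬((n₁ + n₃ + n₄) % 2 = 0 ∧ n₄ % 2 = 0) := by simpa using not_both_even (hgcd 1 1)
  have h20 : ¬((n₂ + n₃ - n₄) % 2 = 0 ∧ n₃ % 2 = 0) := by simpa using not_both_even (hgcd 2 0)
  have h21 : ¬((n₂ + n₃ - n₄) % 2 = 0 ∧ n₄ % 2 = 0) := by simpa using not_both_even (hgcd 2 1)
  have h12' : n₁ % 2 = n₂ % 2 := by omega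
  have h34' : n₃ % 2 = n₄ % 2 := by omega
  refine ⟨?_, ?_, ?_⟩
  · exact h12'
  · exact h34'
  · obtain ⟨a, ha⟩ : (2 : ℤ) ∣ (n₂ - n₁) := by omega
    obtain ⟨b, hb⟩ : (2 : ℤ) ∣ (n₄ - n₃) := by omega
    have hn2 : n₂ = n₁ + 2 * a := by linarith
    have hn4 : n₄ = n₃ + 2 * b := by linarith
    refine ⟨n₁^2 + n₁*n₃ + n₃^2 + 2*n₃*b + 2*b^2 + 2*n₁*a + 2*a^2 - 2*a*b, ?_⟩
    simp [Fin.sum_univ_four, hn2, hn4]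
    ring
end

section
/- In the octonions 𝕆 (the Cayley–Dickson double of the quaternions), for every u ∈ 𝕆 with Re(u) = 0 and |u| = 1, and for all x, y ∈ 𝕆: (−ux)(yu) = (u(xy))ū holds; i.e., the triple of maps (A,B,C) = (−L_u, R_u, L_u ∘ R_ū) satisfies A(x)·B(y) = C(xy) for all x, y ∈ 𝕆. -/
noncomputable section

/-- The octonions, realized via the Cayley–Dickson construction as pairs of
quaternions. -/
abbrev Oct : Type := Quaternion ℝ × Quaternion ℝ

/-- Octonion multiplication (Cayley–Dickson): `(a₁,a₂)(b₁,b₂) = (a₁b₁ − b̄₂a₂, b₂a₁ + a₂b̄₁)`. -/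
def omul (a b : Oct) : Oct :=
  (a.1 * b.1 - star b.2 * a.2, b.2 * a.1 + a.2 * star b.1)

/-- Octonion conjugation. -/
def oconj (a : Oct) : Oct := (star a.1, -a.2)

/-- The real part of an octonion. -/
def oRe (a : Oct) : ℝ := a.1.re

/-- The standard dot product on the quaternions. -/
def qdot (a b : Quaternion ℝ) : ℝ :=
  a.re * b.re + a.imI * b.imI + a.imJ * b.imJ + a.imK * b.imK

/-- The standard dot product on the octonions `𝕆 ≅ ℝ⁸`. -/
def odot (a b : Oct) : ℝ := qdot a.1 b.1 + qdot a.2 b.2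

set_option maxHeartbeats 4000000 in
/-- In the octonions, for every purely imaginary unit octonion `u`
and all `x, y ∈ 𝕆`: `(−ux)(yu) = (u(xy))ū`; i.e. the triple
`(A, B, C) = (−L_u, R_u, L_u ∘ R_ū)` satisfies the triality relation
`A(x)·B(y) = C(xy)`. -/
theorem stmt12 (u : Oct) (hre : oRe u = 0) (hu : odot u u = 1) (x y : Oct) :
    omul (-(omul u x)) (omul y u) = omul (omul u (omul x y)) (oconj u) := by
  obtain ⟨u1, u2⟩ := u
  obtain ⟨x1, x2⟩ := x
  obtain ⟨y1, y2⟩ := y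
  simp only [oRe] at hre
  simp only [omul, oconj, Prod.mk.injEq, Prod.fst, Prod.snd]
  constructor <;>
  · ext <;>
    simp only [Quaternion.re_neg, Quaternion.imI_neg, Quaternion.imJ_neg, Quaternion.imK_neg,
      Quaternion.re_mul, Quaternion.imI_mul, Quaternion.imJ_mul, Quaternion.imK_mul,
      Quaternion.re_sub, Quaternion.imI_sub, Quaternion.imJ_sub, Quaternion.imK_sub,
      Quaternion.re_add, Quaternion.imI_add, Quaternion.imJ_add, Quaternion.imK_add,
      Quaternion.re_star, Quaternion.imI_star, Quaternion.imJ_star, Quaternion.imK_star,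
      Prod.fst_neg, Prod.snd_neg, Prod.fst, Prod.snd, hre] <;>
    ring
end
end

section
/- Let 𝔤 = 𝔨 ⊕ 𝔭 be an orthogonal reductive decomposition with respect to an ad-invariant inner product on a compact Lie algebra 𝔤 (so [𝔨, 𝔭] ⊆ 𝔭), and suppose there is an intermediate subalgebra 𝔨 ⊊ 𝔣 ⊊ 𝔤. If for all linearly independent x, y ∈ 𝔭 one has [x,y] ≠ 0 (i.e., b(𝔨 ⊆ 𝔤) = 1), then there exist x, y ∈ 𝔭 with [x,y] ≠ 0 but the orthogonal projection of [x,y] onto 𝔨 equal to 0. -/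
/-- Let `𝔤 = 𝔨 ⊕ 𝔭` be an orthogonal reductive decomposition with
respect to an ad-invariant inner product (encoded as a symmetric positive-definite
ad-invariant bilinear form `B`) on a compact Lie algebra `𝔤` (so `⁅𝔨, 𝔭⁆ ⊆ 𝔭`), and
suppose there is an intermediate Lie subalgebra `𝔨 ⊊ 𝔣 ⊊ 𝔤`.  If `⁅x, y⁆ ≠ 0` for
all linearly independent `x, y ∈ 𝔭` (i.e. `b(𝔨 ⊆ 𝔤) = 1`), then there exist
`x, y ∈ 𝔭` with `⁅x, y⁆ ≠ 0` whose bracket has vanishing orthogonal projection onto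
`𝔨`, i.e. `⁅x, y⁆ ∈ 𝔨ᗮ`. -/
theorem stmt19 (L : Type*) [LieRing L] [LieAlgebra ℝ L] [FiniteDimensional ℝ L]
    (B : LinearMap.BilinForm ℝ L)
    (hsymm : ∀ x y : L, B x y = B y x)
    (hpos : ∀ x : L, x ≠ 0 → 0 < B x x)
    (hinv : ∀ x y z : L, B ⁅x, y⁆ z = B x ⁅y, z⁆)
    (k f : LieSubalgebra ℝ L) (hkf : k < f) (hft : f ≠ ⊤)
    (p : Submodule ℝ L) (hp : p = B.orthogonal k.toSubmodule)
    (hred : ∀ a ∈ k, ∀ x ∈ p, ⁅a, x⁆ ∈ p)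
    (hb1 : ∀ x ∈ p, ∀ y ∈ p, LinearIndependent ℝ ![x, y] → ⁅x, y⁆ ≠ 0) :
    ∃ x ∈ p, ∃ y ∈ p, ⁅x, y⁆ ≠ 0 ∧ ⁅x, y⁆ ∈ B.orthogonal k.toSubmodule := by
  have hrefl : B.IsRefl := fun x y h => by rw [hsymm]; exact h
  have hnd : B.Nondegenerate := by
    refine ⟨?_, ?_⟩ <;>
    intro x hx <;>
    by_contra hx0 <;>
    exact (hpos x hx0).ne' (hx x)
  -- choose nonzero x ∈ f^⊥
  have hfin : Module.finrank ℝ f.toSubmodule < Module.finrank ℝ L := by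
    apply Submodule.finrank_lt
    intro h
    apply hft
    ext z
    simp only [LieSubalgebra.mem_top, iff_true]
    show z ∈ f.toSubmodule
    rw [h]
    trivial
  have hdimorth : 0 < Module.finrank ℝ (B.orthogonal f.toSubmodule) := by
    rw [LinearMap.BilinForm.finrank_orthogonal hnd]
    omega
  obtain ⟨x, hxf, hx0⟩ : ∃ x ∈ B.orthogonal f.toSubmodule, x ≠ 0 := by
    have : Nontrivial (B.orthogonal f.toSubmodule) := Module.finrank_pos_iff.mp hdimorth
    obtain ⟨⟨x, hx⟩, hx0⟩ := exists_ne (0 : B.orthogonal f.toSubmodule)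
    exact ⟨x, hx, fun h => hx0 (Subtype.ext h)⟩
  -- choose nonzero y ∈ k^⊥ ⊓ f
  have hky : Module.finrank ℝ k.toSubmodule < Module.finrank ℝ f.toSubmodule :=
    Submodule.finrank_lt_finrank_of_lt (by exact_mod_cast hkf)
  have hdim2 : 0 < Module.finrank ℝ (B.orthogonal k.toSubmodule ⊓ f.toSubmodule : Submodule ℝ L) := by
    have h1 := Submodule.finrank_sup_add_finrank_inf_eq (B.orthogonal k.toSubmodule) f.toSubmodule
    have h2 : Module.finrank ℝ ((B.orthogonal k.toSubmodule) ⊔ f.toSubmodule : Submodule ℝ L) ≤ Module.finrank ℝ L :=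
      Submodule.finrank_le _
    have h3 := LinearMap.BilinForm.finrank_orthogonal hnd k.toSubmodule
    have h4 : Module.finrank ℝ k.toSubmodule ≤ Module.finrank ℝ L := Submodule.finrank_le _
    omega
  obtain ⟨y, hyk, hy0⟩ : ∃ y ∈ (B.orthogonal k.toSubmodule ⊓ f.toSubmodule : Submodule ℝ L), y ≠ 0 := by
    have : Nontrivial (B.orthogonal k.toSubmodule ⊓ f.toSubmodule : Submodule ℝ L) :=
      Module.finrank_pos_iff.mp hdim2
    obtain ⟨⟨y, hy⟩, hy0⟩ := exists_ne (0 : (B.orthogonal k.toSubmodule ⊓ f.toSubmodule : Submodule ℝ L))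
    exact ⟨y, hy, fun h => hy0 (Subtype.ext h)⟩
  obtain ⟨hyk', hyf⟩ := Submodule.mem_inf.mp hyk
  have hxp : x ∈ p := by
    rw [hp]
    exact LinearMap.BilinForm.orthogonal_le (by exact_mod_cast hkf.le) hxf
  have hyp : y ∈ p := hp ▸ hyk'
  -- B x y = 0
  have hBxy : B y x = 0 := hxf y hyf
  have hli : LinearIndependent ℝ ![x, y] := by
    rw [LinearIndependent.pair_iff]
    intro s t hst
    have h1 : B x (s • x + t • y) = 0 := by rw [hst]; simp
    rw [map_add, map_smul, map_smul, hsymm x y, hBxy] at h1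
    simp only [smul_eq_mul, mul_zero, add_zero] at h1
    have hs : s = 0 := by
      rcases mul_eq_zero.mp h1 with h | h
      · exact h
      · exact absurd h (hpos x hx0).ne'
    subst hs
    simp only [zero_smul, zero_add] at hst
    exact ⟨rfl, smul_eq_zero.mp hst |>.resolve_right hy0⟩
  refine ⟨x, hxp, y, hyp, hb1 x hxp y hyp hli, ?_⟩
  intro a ha
  have : ⁅y, a⁆ ∈ f.toSubmodule := f.lie_mem hyf (hkf.le ha)
  show B a ⁅x, y⁆ = 0
  rw [hsymm a, hinv, hsymm x]
  exact hxf _ this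
end
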